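/- arXiv:quant-ph/9711020 — 2 statements merged into one kernel-verified Lean document; each statement's English description precedes it below -/
import Mathlib

section
/- If dim H₂ > 1 and the algebra of the second factor is maximally correlated with the algebra of the first factor in a unit vector v ∈ H₁ ⊗ H₂, then v is not a product vector: there do not exist x ∈ H₁ and y ∈ H₂ with v = x ⊗ y. -/
/-!
For a product vector `x ⊗ y` the weight `⟨x ⊗ y, (P ⊗ P') (x ⊗ y)⟩ = ⟨x, P x⟩ ⟨y, P' y⟩` vanishes
as soon as `P' y = 0`. Since `dim H₂ > 1`, the projection `P'` onto a nonzero vector orthogonal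
to `y` is such a nonzero projection, whereas maximal correlation (with `ε = 1/2`) yields some `P`
with `⟨v, (P ⊗ P') v⟩ > 0`.
-/

open scoped InnerProductSpace

noncomputable section

/-- The (completed) Hilbert tensor product of two complex Hilbert spaces `H₁`, `H₂`,
presented as a Hilbert space `H` together with a bilinear map `tmul` (elementary tensors)
whose inner products multiply, whose elementary tensors span a dense subspace, and together
with the tensor product `map A B = A ⊗ B` of bounded operators. -/
structure HilbertTensor (H₁ H₂ H : Type*)
    [NormedAddCommGroup H₁] [InnerProductSpace ℂ H₁] [CompleteSpace H₁]
    [NormedAddCommGroup H₂] [InnerProductSpace ℂ H₂] [CompleteSpace H₂]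
    [NormedAddCommGroup H] [InnerProductSpace ℂ H] [CompleteSpace H] where
  tmul : H₁ →ₗ[ℂ] H₂ →ₗ[ℂ] H
  inner_tmul : ∀ x₁ y₁ x₂ y₂, ⟪tmul x₁ y₁, tmul x₂ y₂⟫_ℂ = ⟪x₁, x₂⟫_ℂ * ⟪y₁, y₂⟫_ℂ
  dense_span : Dense (↑(Submodule.span ℂ {z : H | ∃ x y, z = tmul x y}) : Set H)
  map : (H₁ →L[ℂ] H₁) → (H₂ →L[ℂ] H₂) → (H →L[ℂ] H)
  map_tmul : ∀ A B x y, map A B (tmul x y) = tmul (A x) (B y)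

variable {H₁ H₂ H : Type*}
  [NormedAddCommGroup H₁] [InnerProductSpace ℂ H₁] [CompleteSpace H₁]
  [NormedAddCommGroup H₂] [InnerProductSpace ℂ H₂] [CompleteSpace H₂]
  [NormedAddCommGroup H] [InnerProductSpace ℂ H] [CompleteSpace H]

/-- `v` is cyclic for the first factor: `{(A ⊗ I) v : A bounded on H₁}` is dense in `H`. -/
def HilbertTensor.CyclicFst (T : HilbertTensor H₁ H₂ H) (v : H) : Prop :=
  Dense (Set.range fun A : H₁ →L[ℂ] H₁ => T.map A 1 v)

/-- An orthogonal projection on a Hilbert space: a self-adjoint idempotent bounded operator. -/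
def IsONProj {E : Type*} [NormedAddCommGroup E] [InnerProductSpace ℂ E] [CompleteSpace E]
    (P : E →L[ℂ] E) : Prop :=
  IsSelfAdjoint P ∧ P ∘L P = P

/-- The algebra of the second factor is maximally correlated with the algebra of the first
factor in the state `v`. -/
def HilbertTensor.MaxCorrSndFst (T : HilbertTensor H₁ H₂ H) (v : H) : Prop :=
  ∀ P' : H₂ →L[ℂ] H₂, IsONProj P' → P' ≠ 0 → ∀ ε : ℝ, 0 < ε →
    ∃ P : H₁ →L[ℂ] H₁, IsONProj P ∧ P ≠ 0 ∧
      0 < (⟪v, T.map P 1 v⟫_ℂ).re ∧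
      (1 - ε) * (⟪v, T.map P 1 v⟫_ℂ).re ≤ (⟪v, T.map P P' v⟫_ℂ).re

/-- The orthogonal projection onto the span of a vector, as an operator `E →L[ℂ] E`. -/
def projSpan {E : Type*} [NormedAddCommGroup E] [InnerProductSpace ℂ E] [CompleteSpace E]
    (w : E) : E →L[ℂ] E :=
  (ℂ ∙ w).subtypeL ∘L Submodule.orthogonalProjection (ℂ ∙ w)

theorem exists_ne_zero_inner_eq_zero_of_one_lt_rank {𝕜 E : Type*} [RCLike 𝕜]
    [NormedAddCommGroup E] [InnerProductSpace 𝕜 E] (h : 1 < Module.rank 𝕜 E) (y : E) :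
    ∃ z : E, z ≠ 0 ∧ ⟪z, y⟫_𝕜 = 0 := by
  have hspan : (𝕜 ∙ y) ≠ ⊤ := by
    intro htop
    have hle : Module.rank 𝕜 (𝕜 ∙ y) ≤ 1 := by simpa using rank_span_le (R := 𝕜) {y}
    rw [htop, rank_top] at hle
    exact hle.not_gt h
  obtain ⟨z, hz, hz0⟩ := Submodule.ne_bot_iff _ |>.mp
    (mt Submodule.orthogonal_eq_bot_iff.mp hspan)
  exact ⟨z, hz0, Submodule.mem_orthogonal_singleton_iff_inner_left.mp hz⟩

section projSpan

variable {E : Type*} [NormedAddCommGroup E] [InnerProductSpace ℂ E] [CompleteSpace E]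

theorem projSpan_eq_starProjection (w : E) : projSpan w = (ℂ ∙ w).starProjection := rfl

theorem isONProj_projSpan (w : E) : IsONProj (projSpan w) :=
  ⟨isSelfAdjoint_starProjection _, by
    ext z
    simp [projSpan_eq_starProjection, Submodule.starProjection_eq_self_iff]⟩

theorem projSpan_self (w : E) : projSpan w w = w :=
  Submodule.starProjection_eq_self_iff.mpr (Submodule.mem_span_singleton_self w)

theorem projSpan_ne_zero {w : E} (hw : w ≠ 0) : projSpan w ≠ 0 := fun h0 =>
  hw (by rw [← projSpan_self w, h0, zero_apply])

theorem projSpan_apply_eq_zero {w z : E} (h : ⟪w, z⟫_ℂ = 0) : projSpan w z = 0 := by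
  simp [projSpan_eq_starProjection, Submodule.starProjection_singleton, h]

end projSpan

namespace HilbertTensor

theorem inner_tmul_map_tmul (T : HilbertTensor H₁ H₂ H) (x : H₁) (y : H₂) (A : H₁ →L[ℂ] H₁) (B : H₂ →L[ℂ] H₂) :
    ⟪T.tmul x y, T.map A B (T.tmul x y)⟫_ℂ = ⟪x, A x⟫_ℂ * ⟪y, B y⟫_ℂ := by
  rw [T.map_tmul, T.inner_tmul]

theorem MaxCorrSndFst.exists_re_inner_map_pos {T : HilbertTensor H₁ H₂ H} {v : H}
    (hmc : T.MaxCorrSndFst v) {P' : H₂ →L[ℂ] H₂} (hP' : IsONProj P') (hP'0 : P' ≠ 0) :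
    ∃ P : H₁ →L[ℂ] H₁, 0 < (⟪v, T.map P P' v⟫_ℂ).re := by
  obtain ⟨P, -, -, hpos, hle⟩ := hmc P' hP' hP'0 (1 / 2) one_half_pos
  exact ⟨P, by linarith⟩

end HilbertTensor

theorem maxCorr_imp_not_product_general
    (h₂ : 1 < Module.rank ℂ H₂)
    (T : HilbertTensor H₁ H₂ H) (v : H)
    (hmc : T.MaxCorrSndFst v) :
    ¬ ∃ (x : H₁) (y : H₂), v = T.tmul x y := by
  rintro ⟨x, y, rfl⟩
  obtain ⟨y', hy'0, hy'y⟩ := exists_ne_zero_inner_eq_zero_of_one_lt_rank h₂ y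
  obtain ⟨P, hpos⟩ := hmc.exists_re_inner_map_pos (isONProj_projSpan y') (projSpan_ne_zero hy'0)
  have hy : projSpan y' y = 0 := projSpan_apply_eq_zero hy'y
  rw [T.inner_tmul_map_tmul, hy, inner_zero_right, mul_zero, Complex.zero_re] at hpos
  exact hpos.false

/-- if `dim H₂ > 1` and the algebra of the second factor is maximally correlated
with the algebra of the first factor in the unit vector `v ∈ H₁ ⊗ H₂`, then `v` is not a
product vector: there are no `x ∈ H₁`, `y ∈ H₂` with `v = x ⊗ y`. -/
theorem maxCorr_imp_not_product
    [TopologicalSpace.SeparableSpace H₁] [TopologicalSpace.SeparableSpace H₂]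
    (h₁ : 1 < Module.rank ℂ H₁) (h₂ : 1 < Module.rank ℂ H₂)
    (T : HilbertTensor H₁ H₂ H) (v : H) (hv : ‖v‖ = 1)
    (hmc : T.MaxCorrSndFst v) :
    ¬ ∃ (x : H₁) (y : H₂), v = T.tmul x y :=
  maxCorr_imp_not_product_general h₂ T v hmc

end
end

section
/- A unit vector v ∈ H = H₁ ⊗ H₂ ⊗ ⋯ ⊗ Hₙ is hyperentangled if and only if for every i ∈ {1,…,n} the vector v is {i}-cyclic, i.e. {(A ⊗ I)v : A a bounded operator on H_i} is dense in H (where A ⊗ I acts as A on the i-th factor and as the identity on all other factors). -/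
open scoped InnerProductSpace

noncomputable section

/-- The (completed) Hilbert tensor product `H = H₁ ⊗ ⋯ ⊗ Hₙ` of a finite family of complex
Hilbert spaces `Hs i`, presented as a Hilbert space `H` together with a multilinear map
`tmul` (elementary tensors) whose inner products multiply, whose elementary tensors span a
dense subspace, and together with, for each factor `i`, the embedding
`A ↦ A ⊗ (identity on the other factors)` of the bounded operators on `Hs i`. -/
structure MultiTensor (ι : Type*) [Fintype ι] [DecidableEq ι] (Hs : ι → Type*) (H : Type*)
    [∀ i, NormedAddCommGroup (Hs i)] [∀ i, InnerProductSpace ℂ (Hs i)]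
    [∀ i, CompleteSpace (Hs i)]
    [NormedAddCommGroup H] [InnerProductSpace ℂ H] [CompleteSpace H] where
  tmul : MultilinearMap ℂ Hs H
  inner_tmul : ∀ x y, ⟪tmul x, tmul y⟫_ℂ = ∏ i, ⟪x i, y i⟫_ℂ
  dense_span : Dense (↑(Submodule.span ℂ (Set.range tmul)) : Set H)
  embed : ∀ i, (Hs i →L[ℂ] Hs i) → (H →L[ℂ] H)
  embed_tmul : ∀ i A x, embed i A (tmul x) = tmul (Function.update x i (A (x i)))

variable {ι : Type*} [Fintype ι] [DecidableEq ι] {Hs : ι → Type*} {H : Type*}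
    [∀ i, NormedAddCommGroup (Hs i)] [∀ i, InnerProductSpace ℂ (Hs i)]
    [∀ i, CompleteSpace (Hs i)]
    [NormedAddCommGroup H] [InnerProductSpace ℂ H] [CompleteSpace H]

/-- The von Neumann algebra of the subsystem `S`: the double commutant (in the bounded
operators on `H`) of the operators of the form `A ⊗ I` with `A` a bounded operator on a
factor `Hs i`, `i ∈ S`.  (It consists of the operators `B ⊗ I` with `B` bounded on `H_S`.) -/
def MultiTensor.alg (T : MultiTensor ι Hs H) (S : Set ι) : Set (H →L[ℂ] H) :=
  Set.centralizer (Set.centralizer (⋃ i ∈ S, Set.range (T.embed i)))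

/-- The algebra of the subsystem `S` is maximally correlated with the algebra of the
subsystem `S'` in the state `v`: for every nonzero orthogonal projection `P'` of the algebra
of `S` and every `ε > 0` there is a nonzero orthogonal projection `P` of the algebra of `S'`
with `⟪v, P v⟫ > 0` and `⟪v, P' P v⟫ ≥ (1 - ε) ⟪v, P v⟫`. -/
def MultiTensor.MaxCorr (T : MultiTensor ι Hs H) (S S' : Set ι) (v : H) : Prop :=
  ∀ P' ∈ T.alg S, IsONProj P' → P' ≠ 0 → ∀ ε : ℝ, 0 < ε →
    ∃ P ∈ T.alg S', IsONProj P ∧ P ≠ 0 ∧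
      0 < (⟪v, P v⟫_ℂ).re ∧
      (1 - ε) * (⟪v, P v⟫_ℂ).re ≤ (⟪v, P' (P v)⟫_ℂ).re

/-- `v` is hyperentangled: for all disjoint nonempty subsystems `S`, `S'` of `{1,…,n}`, the
algebra of `S` is maximally correlated with the algebra of `S'` in `v`. -/
def MultiTensor.Hyper (T : MultiTensor ι Hs H) (v : H) : Prop :=
  ∀ S S' : Set ι, S.Nonempty → S'.Nonempty → Disjoint S S' → T.MaxCorr S S' v

/-!
If the orbit `{(A ⊗ I) v}` of `v` under the operators on a factor `i` is not dense, the projection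
`P'` onto its orthogonal complement commutes with all `A ⊗ I`. By the commutation theorem (an
operator commuting with every `B ⊗ I` on the factors `j ≠ i` is of the form `C ⊗ I` on factor `i`)
`P'` then lies in the algebra of the other factors, and since `P' v = 0` it cannot be maximally
correlated with the algebra of `{i}`.

Conversely let `0 ≠ P'` lie in the algebra of `S ∌ i`, so that `P'` commutes with all `A ⊗ I`.
Some `|x⟩⟨x| ⊗ I` maps a nonzero vector of the range of `P'` to a nonzero vector `z`, again fixed
by `P'`. Cyclicity gives `A` with `(|x⟩⟨x| A ⊗ I) v = (|x⟩⟨g| ⊗ I) v` close to `z`, hence almost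
fixed by `P'`. As `‖(|x⟩⟨g| ⊗ I) u‖² = ‖x‖² ⟪u, P u⟫` for the rank one projection `P = |g⟩⟨g| ⊗ I`
(with `‖g‖ = 1`), and `P'` commutes with `|x⟩⟨g| ⊗ I`, this says `⟪v, P' P v⟫ ≈ ⟪v, P v⟫ > 0`.
-/

open ContinuousLinearMap InnerProductSpace

theorem isONProj_iff_isStarProjection {E : Type*} [NormedAddCommGroup E]
    [InnerProductSpace ℂ E] [CompleteSpace E] {P : E →L[ℂ] E} :
    IsONProj P ↔ IsStarProjection P :=
  ⟨fun h => ⟨h.2, h.1⟩, fun h => ⟨h.isSelfAdjoint, h.isIdempotentElem⟩⟩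

theorem Submodule.commute_starProjection_orthogonal {𝕜 E : Type*} [RCLike 𝕜]
    [NormedAddCommGroup E] [InnerProductSpace 𝕜 E] [CompleteSpace E] {K : Submodule 𝕜 E}
    {C : E →L[𝕜] E} (hC : K ∈ Module.End.invtSubmodule C.toLinearMap)
    (hC' : K ∈ Module.End.invtSubmodule (adjoint C).toLinearMap) :
    Commute Kᗮ.starProjection C := by
  rw [(isIdempotentElem_starProjection Kᗮ).commute_iff, range_starProjection,
    ker_starProjection]
  refine ⟨orthogonal_mem_invtSubmodule hC', orthogonal_mem_invtSubmodule ?_⟩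
  exact orthogonal_mem_invtSubmodule (T := adjoint C) (by rwa [adjoint_adjoint])

theorem IsStarProjection.inner_apply_apply_of_commute {𝕜 E : Type*} [RCLike 𝕜]
    [NormedAddCommGroup E] [InnerProductSpace 𝕜 E] [CompleteSpace E] {p r : E →L[𝕜] E}
    (hp : IsStarProjection p) (hpr : Commute p r) (u : E) :
    ⟪p u, r (p u)⟫_𝕜 = ⟪u, p (r u)⟫_𝕜 := by
  rw [← adjoint_inner_right, ← star_eq_adjoint, hp.isSelfAdjoint.star_eq, ← mul_apply_eq_comp r,
    ← mul_apply_eq_comp p, ← hpr.eq, ← mul_assoc, hp.isIdempotentElem.eq, mul_apply_eq_comp]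

theorem InnerProductSpace.rankOne_eq_rankOne_normalize {𝕜 E : Type*} [RCLike 𝕜]
    [NormedAddCommGroup E] [InnerProductSpace 𝕜 E] (x : E) {g : E} (hg : g ≠ 0) :
    rankOne 𝕜 x g = rankOne 𝕜 ((‖g‖ : 𝕜) • x) ((‖g‖⁻¹ : 𝕜) • g) := by
  have : (‖g‖ : 𝕜) ≠ 0 := by simpa using hg
  simp [smul_smul, this]

namespace MultiTensor

variable (T : MultiTensor ι Hs H)

theorem ext_tmul {F : Type*} [NormedAddCommGroup F] [NormedSpace ℂ F] {f g : H →L[ℂ] F}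
    (h : ∀ x, f (T.tmul x) = g (T.tmul x)) : f = g :=
  ContinuousLinearMap.ext_on T.dense_span (Set.forall_mem_range.2 h)

theorem ext_inner_tmul {p q : H} (h : ∀ x, ⟪p, T.tmul x⟫_ℂ = ⟪q, T.tmul x⟫_ℂ) : p = q :=
  innerSL_inj.1 (T.ext_tmul h)

theorem adjoint_eq_of_inner_tmul {A B : H →L[ℂ] H}
    (h : ∀ x y, ⟪A (T.tmul x), T.tmul y⟫_ℂ = ⟪T.tmul x, B (T.tmul y)⟫_ℂ) : adjoint A = B := by
  suffices A = adjoint B by rw [this, adjoint_adjoint]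
  exact T.ext_tmul fun x => T.ext_inner_tmul fun y => by rw [h, adjoint_inner_left]

theorem norm_tmul (x : ∀ i, Hs i) : ‖T.tmul x‖ = ∏ i, ‖x i‖ := by
  have h : ‖T.tmul x‖ ^ 2 = (∏ i, ‖x i‖) ^ 2 := by
    rw [← inner_self_eq_norm_sq (𝕜 := ℂ), T.inner_tmul, ← Finset.prod_pow]
    simp only [inner_self_eq_norm_sq_to_K]
    norm_cast
  exact (sq_eq_sq₀ (norm_nonneg _) (Finset.prod_nonneg fun i _ => norm_nonneg _)).1 h

def tmulL : ContinuousMultilinearMap ℂ Hs H :=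
  T.tmul.mkContinuous 1 fun x => by rw [one_mul, T.norm_tmul]

theorem inner_tmul_update (i : ι) (x y : ∀ j, Hs j) (a b : Hs i) :
    ⟪T.tmul (Function.update x i a), T.tmul (Function.update y i b)⟫_ℂ
      = ⟪a, b⟫_ℂ * ∏ j ∈ {i}ᶜ, ⟪x j, y j⟫_ℂ := by
  rw [T.inner_tmul, Fintype.prod_eq_mul_prod_compl i, Function.update_self,
    Function.update_self]
  congr 1
  refine Finset.prod_congr rfl fun j hj => ?_
  rw [Finset.mem_compl, Finset.mem_singleton] at hj
  rw [Function.update_of_ne hj, Function.update_of_ne hj]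

theorem embed_one (i : ι) : T.embed i 1 = 1 :=
  T.ext_tmul fun x => by simp [T.embed_tmul]

theorem embed_mul (i : ι) (A B : Hs i →L[ℂ] Hs i) :
    T.embed i (A * B) = T.embed i A * T.embed i B :=
  T.ext_tmul fun x => by simp [T.embed_tmul]

theorem embed_add (i : ι) (A B : Hs i →L[ℂ] Hs i) :
    T.embed i (A + B) = T.embed i A + T.embed i B :=
  T.ext_tmul fun x => by simp [T.embed_tmul, MultilinearMap.map_update_add]

theorem embed_smul (i : ι) (c : ℂ) (A : Hs i →L[ℂ] Hs i) :
    T.embed i (c • A) = c • T.embed i A :=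
  T.ext_tmul fun x => by simp [T.embed_tmul, MultilinearMap.map_update_smul]

theorem embed_zero (i : ι) : T.embed i 0 = 0 := by
  simpa using T.embed_smul i 0 0

theorem commute_embed {i j : ι} (hij : i ≠ j) (A : Hs i →L[ℂ] Hs i) (B : Hs j →L[ℂ] Hs j) :
    Commute (T.embed i A) (T.embed j B) :=
  T.ext_tmul fun x => by
    simp [T.embed_tmul, Function.update_of_ne hij, Function.update_of_ne hij.symm,
      Function.update_comm hij]

theorem embed_adjoint (i : ι) (A : Hs i →L[ℂ] Hs i) :
    adjoint (T.embed i A) = T.embed i (adjoint A) :=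
  T.adjoint_eq_of_inner_tmul fun x y => by
    conv_lhs => rw [← Function.update_eq_self i y]
    conv_rhs => rw [← Function.update_eq_self i x]
    rw [T.embed_tmul, T.embed_tmul, T.inner_tmul_update, T.inner_tmul_update,
      adjoint_inner_right]

theorem pairwise_commute_embed (s : Set ι) (B : ∀ j, Hs j →L[ℂ] Hs j) :
    s.Pairwise (Function.onFun Commute fun j => T.embed j (B j)) :=
  fun _ _ _ _ hjk => T.commute_embed hjk _ _

def prodOn (s : Finset ι) (B : ∀ j, Hs j →L[ℂ] Hs j) : H →L[ℂ] H :=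
  s.noncommProd (fun j => T.embed j (B j)) (T.pairwise_commute_embed _ B)

theorem prodOn_tmul (s : Finset ι) (B : ∀ j, Hs j →L[ℂ] Hs j) (y : ∀ j, Hs j) :
    T.prodOn s B (T.tmul y) = T.tmul (s.piecewise (fun j => B j (y j)) y) := by
  induction s using Finset.induction_on with
  | empty => simp [prodOn]
  | insert j s hj ih =>
    rw [prodOn, Finset.noncommProd_insert_of_notMem _ _ _ _ hj, mul_apply_eq_comp, ← prodOn, ih,
      T.embed_tmul, Finset.piecewise_insert, Finset.piecewise_eq_of_notMem _ _ _ hj]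

theorem adjoint_prodOn (s : Finset ι) (B : ∀ j, Hs j →L[ℂ] Hs j) :
    adjoint (T.prodOn s B) = T.prodOn s fun j => adjoint (B j) :=
  T.adjoint_eq_of_inner_tmul fun x y => by
    rw [T.prodOn_tmul, T.prodOn_tmul, T.inner_tmul, T.inner_tmul]
    refine Finset.prod_congr rfl fun j _ => ?_
    by_cases hj : j ∈ s <;> simp [hj, adjoint_inner_right]

theorem commute_prodOn {C : H →L[ℂ] H} (s : Finset ι) (B : ∀ j, Hs j →L[ℂ] Hs j)
    (hC : ∀ j ∈ s, Commute C (T.embed j (B j))) : Commute C (T.prodOn s B) :=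
  Finset.noncommProd_commute _ _ _ _ hC

theorem tmul_update_smul (i : ι) (c : ι → ℂ) (a : ∀ j, Hs j) (x : Hs i) :
    T.tmul (Function.update (fun j => c j • a j) i x)
      = (∏ j ∈ {i}ᶜ, c j) • T.tmul (Function.update a i x) := by
  have h : Function.update (fun j => c j • a j) i x
      = fun j => Function.update c i 1 j • Function.update a i x j := by
    funext j
    rcases eq_or_ne j i with rfl | hj <;> simp [*]
  rw [h, T.tmul.map_smul_univ, Fintype.prod_eq_mul_prod_compl i, Function.update_self, one_mul,
    Finset.prod_update_of_notMem (by simp)]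

/-- `V = ⊗_{j ≠ i} |w j⟩⟨a j|` commutes with `X`, maps `ψ (w i)` to `w`, and `V†` maps `u` to a
multiple of `ψ (u i)`. -/
theorem inner_apply_tmul_eq {i : ι} {a : ∀ j, Hs j} (ha : ∀ j, ‖a j‖ = 1) {ψ : Hs i →L[ℂ] H}
    (hψ : ∀ x, ψ x = T.tmul (Function.update a i x)) {X : H →L[ℂ] H}
    (hX : ∀ j ≠ i, ∀ B, Commute X (T.embed j B)) (w u : ∀ j, Hs j) :
    ⟪X (T.tmul w), T.tmul u⟫_ℂ = (∏ j ∈ {i}ᶜ, ⟪w j, u j⟫_ℂ) * ⟪X (ψ (w i)), ψ (u i)⟫_ℂ := by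
  set V := T.prodOn {i}ᶜ fun j => rankOne ℂ (w j) (a j)
  have hw : T.tmul w = V (ψ (w i)) := by
    rw [hψ, T.prodOn_tmul]
    congr 1
    funext j
    rcases eq_or_ne j i with rfl | hj <;> simp [*, inner_self_eq_norm_sq_to_K]
  have hu : adjoint V (T.tmul u) = (∏ j ∈ {i}ᶜ, ⟪w j, u j⟫_ℂ) • ψ (u i) := by
    rw [T.adjoint_prodOn, hψ, ← T.tmul_update_smul, T.prodOn_tmul, Finset.piecewise_compl,
      Finset.piecewise_singleton]
    simp
  have hXV : Commute X V :=
    T.commute_prodOn _ _ fun j hj => hX j (by simpa using hj) _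
  rw [hw, ← mul_apply_eq_comp, hXV.eq, mul_apply_eq_comp, ← adjoint_inner_right, hu,
    inner_smul_right]

theorem exists_eq_embed_of_forall_commute [∀ j, Nontrivial (Hs j)] (i : ι) {C : H →L[ℂ] H}
    (hC : ∀ j ≠ i, ∀ B, Commute C (T.embed j B)) : ∃ C₀, C = T.embed i C₀ := by
  choose a ha using fun j => exists_norm_eq (Hs j) zero_le_one
  let ψ := T.tmulL.toContinuousLinearMap a i
  have hψ : ∀ x, ψ x = T.tmul (Function.update a i x) := fun _ => rfl
  have hψψ : ∀ x y, ⟪ψ x, ψ y⟫_ℂ = ⟪x, y⟫_ℂ := fun x y => by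
    rw [hψ, hψ, T.inner_tmul_update, Finset.prod_eq_one fun j _ => ?_, mul_one]
    rw [inner_self_eq_norm_sq_to_K, ha]
    simp
  set C₀ := adjoint ψ ∘L C ∘L ψ with hC₀_def
  have hC₀ψ : ∀ x, T.embed i C₀ (ψ x) = ψ (C₀ x) := fun x => by
    rw [hψ, hψ, T.embed_tmul, Function.update_self, Function.update_idem]
  have hC₀ : ∀ j ≠ i, ∀ B, Commute (T.embed i C₀) (T.embed j B) :=
    fun j hj B => T.commute_embed hj.symm _ _
  refine ⟨C₀, T.ext_tmul fun w => T.ext_inner_tmul fun u => ?_⟩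
  rw [T.inner_apply_tmul_eq ha hψ hC, T.inner_apply_tmul_eq ha hψ hC₀, hC₀ψ, hψψ, hC₀_def,
    comp_apply, comp_apply, adjoint_inner_left]

theorem embed_mem_alg {S : Set ι} {i : ι} (hi : i ∈ S) (A : Hs i →L[ℂ] Hs i) :
    T.embed i A ∈ T.alg S :=
  Set.subset_centralizer_centralizer (Set.mem_biUnion hi ⟨A, rfl⟩)

theorem commute_embed_of_mem_alg {S : Set ι} {P : H →L[ℂ] H} (hP : P ∈ T.alg S) {i : ι}
    (hi : i ∉ S) (A : Hs i →L[ℂ] Hs i) : Commute P (T.embed i A) := by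
  refine (hP _ fun m hm => ?_).symm
  obtain ⟨j, hj, B, rfl⟩ := Set.mem_iUnion₂.1 hm
  exact (T.commute_embed (ne_of_mem_of_not_mem hj hi) B A).eq

theorem mem_alg_compl_singleton [∀ j, Nontrivial (Hs j)] {i : ι} {P : H →L[ℂ] H}
    (hP : ∀ A, Commute P (T.embed i A)) : P ∈ T.alg {i}ᶜ := by
  intro C hC
  obtain ⟨C₀, rfl⟩ := T.exists_eq_embed_of_forall_commute i fun j hj B =>
    (hC _ (Set.mem_biUnion (Set.mem_compl_singleton_iff.2 hj) ⟨B, rfl⟩)).symm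
  exact (hP C₀).symm.eq

theorem isStarProjection_embed {i : ι} {A : Hs i →L[ℂ] Hs i} (hA : IsStarProjection A) :
    IsStarProjection (T.embed i A) :=
  ⟨by rw [IsIdempotentElem, ← T.embed_mul, hA.isIdempotentElem.eq],
    by rw [IsSelfAdjoint, star_eq_adjoint, T.embed_adjoint, ← star_eq_adjoint,
      hA.isSelfAdjoint.star_eq]⟩

def orbit (i : ι) (v : H) : Submodule ℂ H where
  carrier := Set.range fun A : Hs i →L[ℂ] Hs i => T.embed i A v
  add_mem' := by
    rintro _ _ ⟨A, rfl⟩ ⟨B, rfl⟩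
    exact ⟨A + B, by simp only [T.embed_add, add_apply]⟩
  zero_mem' := ⟨0, by simp only [T.embed_zero, zero_apply]⟩
  smul_mem' := by
    rintro c _ ⟨A, rfl⟩
    exact ⟨c • A, by simp only [T.embed_smul, smul_apply]⟩

theorem mem_orbit_self (i : ι) (v : H) : v ∈ T.orbit i v :=
  ⟨1, by simp only [T.embed_one, one_apply_eq_self]⟩

theorem orbit_mem_invtSubmodule (i : ι) (v : H) (D : Hs i →L[ℂ] Hs i) :
    T.orbit i v ∈ Module.End.invtSubmodule (T.embed i D).toLinearMap := by
  rintro _ ⟨A, rfl⟩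
  exact ⟨D * A, by simp only [T.embed_mul, mul_apply_eq_comp]; rfl⟩

theorem dense_orbit_of_maxCorr [∀ j, Nontrivial (Hs j)] {i : ι} {v : H}
    (h : T.MaxCorr {i}ᶜ {i} v) : Dense (T.orbit i v : Set H) := by
  set P' := (T.orbit i v)ᗮ.starProjection
  have hP'v : P' v = 0 := (Submodule.starProjection_apply_eq_zero_iff _).2
    (Submodule.le_orthogonal_orthogonal _ (T.mem_orbit_self i v))
  have hP' : P' ∈ T.alg {i}ᶜ := T.mem_alg_compl_singleton fun A =>
    Submodule.commute_starProjection_orthogonal (T.orbit_mem_invtSubmodule i v A)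
      (by rw [T.embed_adjoint]; exact T.orbit_mem_invtSubmodule i v _)
  by_contra hd
  have hP'0 : P' ≠ 0 := by
    intro h0
    apply hd
    rw [Submodule.dense_iff_topologicalClosure_eq_top, ← Submodule.orthogonal_orthogonal_eq_closure,
      ← Submodule.range_starProjection (T.orbit i v)ᗮ,
      show (T.orbit i v)ᗮ.starProjection = 0 from h0]
    simp
  obtain ⟨P, -, -, -, hpos, hle⟩ := h P' hP' (isONProj_iff_isStarProjection.2
    isStarProjection_starProjection) hP'0 (1 / 2) one_half_pos
  have h0 : ⟪v, P' (P v)⟫_ℂ = 0 := by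
    rw [← adjoint_inner_left, ← star_eq_adjoint, (isSelfAdjoint_starProjection _).star_eq, hP'v,
      inner_zero_left]
  rw [h0, Complex.zero_re] at hle
  linarith

theorem norm_sq_embed_rankOne_apply (i : ι) (x g : Hs i) (u : H) :
    ‖T.embed i (rankOne ℂ x g) u‖ ^ 2 = ‖x‖ ^ 2 * (⟪u, T.embed i (rankOne ℂ g g) u⟫_ℂ).re := by
  rw [apply_norm_sq_eq_inner_adjoint_right, T.embed_adjoint, adjoint_rankOne, ← mul_def,
    ← T.embed_mul, mul_def, rankOne_comp_rankOne, inner_self_eq_norm_sq_to_K, T.embed_smul,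
    smul_apply, inner_smul_right, ← RCLike.ofReal_pow, RCLike.re_ofReal_mul, RCLike.re_to_complex]

theorem exists_embed_rankOne_apply_ne_zero (i : ι) {z : H} (hz : z ≠ 0) :
    ∃ x : Hs i, T.embed i (rankOne ℂ x x) z ≠ 0 := by
  by_contra! h
  refine hz (T.ext_inner_tmul fun w => ?_)
  have hw : T.embed i (rankOne ℂ (w i) (w i)) (T.tmul w) = ⟪w i, w i⟫_ℂ • T.tmul w := by
    rw [T.embed_tmul, rankOne_apply, MultilinearMap.map_update_smul, Function.update_eq_self]
  have key : ⟪w i, w i⟫_ℂ * ⟪z, T.tmul w⟫_ℂ = 0 := by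
    rw [← inner_smul_right, ← hw, ← adjoint_inner_left, T.embed_adjoint, adjoint_rankOne, h,
      inner_zero_left]
  rcases mul_eq_zero.1 key with hwi | hzw
  · rw [T.tmul.map_coord_zero i (inner_self_eq_zero.1 hwi), inner_zero_right, inner_zero_right]
  · rw [hzw, inner_zero_left]

theorem exists_embed_rankOne_apply_almost_fixed {i : ι} {v : H}
    (hv : Dense (T.orbit i v : Set H)) {P' : H →L[ℂ] H} (hP' : IsStarProjection P')
    (hP'0 : P' ≠ 0) (hcomm : ∀ A, Commute P' (T.embed i A)) {ε : ℝ} (hε : 0 < ε) :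
    ∃ x g : Hs i, ‖g‖ = 1 ∧ T.embed i (rankOne ℂ x g) v ≠ 0 ∧
      (1 - ε) * ‖T.embed i (rankOne ℂ x g) v‖ ^ 2 < ‖P' (T.embed i (rankOne ℂ x g) v)‖ ^ 2 := by
  let U : Set H := {u | u ≠ 0 ∧ (1 - ε) * ‖u‖ ^ 2 < ‖P' u‖ ^ 2}
  have hU : IsOpen U := isOpen_ne.inter <|
    isOpen_lt (continuous_const.mul (continuous_norm.pow 2)) ((P'.continuous.norm).pow 2)
  obtain ⟨y, hy⟩ : ∃ y, P' y ≠ 0 := by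
    by_contra! h
    exact hP'0 (ContinuousLinearMap.ext h)
  obtain ⟨x, hx⟩ := T.exists_embed_rankOne_apply_ne_zero i hy
  set Q := T.embed i (rankOne ℂ x x)
  have hQ : Q (P' y) ∈ U := by
    have hfix : P' (Q (P' y)) = Q (P' y) := by
      rw [← mul_apply_eq_comp, (hcomm _).eq, mul_apply_eq_comp, ← mul_apply_eq_comp P',
        hP'.isIdempotentElem.eq]
    refine ⟨hx, ?_⟩
    rw [hfix]
    nlinarith [pow_pos (norm_pos_iff.2 hx) 2]
  obtain ⟨_, ⟨A, rfl⟩, hA⟩ := hv.exists_mem_open (hU.preimage Q.continuous) ⟨_, hQ⟩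
  have hQA : Q (T.embed i A v) = T.embed i (rankOne ℂ x (adjoint A x)) v := by
    rw [← mul_apply_eq_comp, ← T.embed_mul, mul_def, rankOne_comp]
  rw [Set.mem_preimage, hQA] at hA
  have hg : adjoint A x ≠ 0 := by
    intro hg
    exact hA.1 (by rw [hg, map_zero, T.embed_zero, zero_apply])
  rw [rankOne_eq_rankOne_normalize _ hg] at hA
  exact ⟨_, _, norm_smul_inv_norm hg, hA⟩

theorem maxCorr_of_dense_orbit {i : ι} {v : H} (hv : Dense (T.orbit i v : Set H))
    {S S' : Set ι} (hiS : i ∉ S) (hiS' : i ∈ S') : T.MaxCorr S S' v := by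
  intro P' hP'alg hP' hP'0 ε hε
  have hcomm := T.commute_embed_of_mem_alg hP'alg hiS
  obtain ⟨x, g, hg, hne, hlt⟩ := T.exists_embed_rankOne_apply_almost_fixed hv
    (isONProj_iff_isStarProjection.1 hP') hP'0 hcomm hε
  set P := T.embed i (rankOne ℂ g g)
  have h1 := T.norm_sq_embed_rankOne_apply i x g v
  have h2 : ‖P' (T.embed i (rankOne ℂ x g) v)‖ ^ 2 = ‖x‖ ^ 2 * (⟪v, P' (P v)⟫_ℂ).re := by
    rw [← mul_apply_eq_comp, (hcomm _).eq, mul_apply_eq_comp, T.norm_sq_embed_rankOne_apply,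
      (isONProj_iff_isStarProjection.1 hP').inner_apply_apply_of_commute (hcomm _)]
  have hpos : 0 < ‖x‖ ^ 2 * (⟪v, P v⟫_ℂ).re := h1 ▸ pow_pos (norm_pos_iff.2 hne) 2
  have hPv : 0 < (⟪v, P v⟫_ℂ).re := pos_of_mul_pos_right hpos (sq_nonneg _)
  refine ⟨P, T.embed_mem_alg hiS' _, isONProj_iff_isStarProjection.2
    (T.isStarProjection_embed (isStarProjection_rankOne_self hg)), fun h0 => ?_, hPv, ?_⟩
  · simp [P, h0] at hPv
  · rw [h1, h2, ← mul_assoc, mul_comm (1 - ε), mul_assoc] at hlt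
    exact (lt_of_mul_lt_mul_left hlt (sq_nonneg _)).le

end MultiTensor

theorem hyper_iff_forall_singleton_cyclic_general
    (hn : 1 < Fintype.card ι) (hdim : ∀ i, 1 < Module.rank ℂ (Hs i))
    (T : MultiTensor ι Hs H) (v : H) :
    T.Hyper v ↔ ∀ i, Dense (Set.range fun A : Hs i →L[ℂ] Hs i => T.embed i A v) := by
  have : ∀ i, Nontrivial (Hs i) := fun i => rank_pos_iff_nontrivial.1 (zero_lt_one.trans (hdim i))
  refine ⟨fun h i => ?_, fun h S S' _ ⟨i, hiS'⟩ hdisj => ?_⟩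
  · obtain ⟨j, hji⟩ := Fintype.exists_ne_of_one_lt_card hn i
    exact T.dense_orbit_of_maxCorr (h _ _ ⟨j, hji⟩ (Set.singleton_nonempty i) disjoint_compl_left)
  · exact T.maxCorr_of_dense_orbit (h i) (Set.disjoint_right.1 hdisj hiS') hiS'

/-- a unit vector `v ∈ H = H₁ ⊗ ⋯ ⊗ Hₙ` is hyperentangled if and only if for
every `i` the vector `v` is `{i}`-cyclic, i.e. `{(A ⊗ I) v : A bounded on Hs i}` is dense in
`H`. -/
theorem hyper_iff_forall_singleton_cyclic
    [∀ i, TopologicalSpace.SeparableSpace (Hs i)]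
    (hn : 1 < Fintype.card ι) (hdim : ∀ i, 1 < Module.rank ℂ (Hs i))
    (T : MultiTensor ι Hs H) (v : H) (hv : ‖v‖ = 1) :
    T.Hyper v ↔ ∀ i, Dense (Set.range fun A : Hs i →L[ℂ] Hs i => T.embed i A v) :=
  hyper_iff_forall_singleton_cyclic_general hn hdim T v

end
end
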